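/- arXiv:2412.10616 — 2 statements merged into one kernel-verified Lean document; each statement's English description precedes it below -/
import Mathlib

section
/- Let A be a d×d real symmetric positive semidefinite matrix, γ > 0, V > 0, and T > 0. Define Ã = A + (V²/γ)·I with eigenvalues λ₁,…,λ_d. If d_hyb is the number of indices i with λ_i ≤ 4T/γ, then Σ_{i=1}^d log(1 + (4T/γ)/λ_i) ≤ d_hyb · log(1 + 4T/V²) + d · log(2). -/
open Matrix
open scoped ComplexOrder

/-! Every eigenvalue of `A + (V²/γ)·I` is at least `V²/γ`, so with `x = 4T/γ` each term `log (1 + x/λ)`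
is at most `log 2` when `λ > x`, and at most `log (1 + x/(V²/γ)) = log (1 + 4T/V²)` otherwise. -/
lemma Matrix.IsHermitian.le_eigenvalues_of_posSemidef_sub {𝕜 n : Type*} [RCLike 𝕜] [Fintype n]
    [DecidableEq n] {B : Matrix n n 𝕜} (hB : B.IsHermitian) {c : ℝ}
    (h : (B - (c : 𝕜) • 1).PosSemidef) (i : n) : c ≤ hB.eigenvalues i := by
  have hv : star ⇑(hB.eigenvectorBasis i) ⬝ᵥ ⇑(hB.eigenvectorBasis i) = 1 := by
    rw [dotProduct_comm, ← EuclideanSpace.inner_eq_star_dotProduct, inner_self_eq_norm_sq_to_K,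
      hB.eigenvectorBasis.orthonormal.1 i]
    simp
  have := h.re_dotProduct_nonneg (hB.eigenvectorBasis i)
  rw [sub_mulVec, dotProduct_sub, map_sub, ← hB.eigenvalues_eq, smul_mulVec, one_mulVec,
    dotProduct_smul, hv] at this
  simpa using this

namespace Real

lemma log_one_add_div_le_ite_add_log_two {x c l : ℝ} (hx : 0 ≤ x) (hc : 0 < c) (hcl : c ≤ l) :
    log (1 + x / l) ≤ (if l ≤ x then log (1 + x / c) else 0) + log 2 := by
  have hl : 0 < l := hc.trans_le hcl
  split_ifs with hlx
  · have : log (1 + x / l) ≤ log (1 + x / c) :=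
      log_le_log (by positivity) (by gcongr)
    linarith [log_nonneg one_le_two]
  · have : x / l ≤ 1 := (div_le_one hl).2 (not_le.1 hlx).le
    rw [zero_add]
    exact log_le_log (by positivity) (by linarith)

lemma sum_log_one_add_div_le {ι : Type*} [Fintype ι] {x c : ℝ} (l : ι → ℝ) (hx : 0 ≤ x)
    (hc : 0 < c) (hl : ∀ i, c ≤ l i) :
    ∑ i, log (1 + x / l i)
      ≤ (Finset.univ.filter fun i => l i ≤ x).card * log (1 + x / c)
        + Fintype.card ι * log 2 := by
  calc ∑ i, log (1 + x / l i)
      ≤ ∑ i, ((if l i ≤ x then log (1 + x / c) else 0) + log 2) :=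
        Finset.sum_le_sum fun i _ => log_one_add_div_le_ite_add_log_two hx hc (hl i)
    _ = _ := by
        rw [Finset.sum_add_distrib, Finset.sum_ite, Finset.sum_const_zero, add_zero,
          Finset.sum_const, Finset.sum_const, Finset.card_univ, nsmul_eq_mul, nsmul_eq_mul]

end Real

/-- Key step bounding the hybrid SEC by the number of poorly covered
directions: eigenvalues of `Ã = A + (V²/γ)·I` satisfy
`Σᵢ log(1 + (4T/γ)/λᵢ) ≤ d_hyb·log(1 + 4T/V²) + d·log 2`, where `d_hyb`
counts the eigenvalues at most `4T/γ`. -/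
theorem hybrid_sec_eigenvalue_bound {d : ℕ} (A : Matrix (Fin d) (Fin d) ℝ)
    (hA : A.PosSemidef) (γ V T : ℝ) (hγ : 0 < γ) (hV : 0 < V) (hT : 0 < T)
    (Atil : Matrix (Fin d) (Fin d) ℝ)
    (hAtil : Atil = A + (V ^ 2 / γ) • (1 : Matrix (Fin d) (Fin d) ℝ))
    (hH : Atil.IsHermitian)
    (dhyb : ℕ)
    (hdhyb : dhyb = (Finset.univ.filter
      (fun i => hH.eigenvalues i ≤ 4 * T / γ)).card) :
    ∑ i, Real.log (1 + (4 * T / γ) / hH.eigenvalues i)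
      ≤ dhyb * Real.log (1 + 4 * T / V ^ 2) + d * Real.log 2 := by
  have hlow : ∀ i, V ^ 2 / γ ≤ hH.eigenvalues i :=
    hH.le_eigenvalues_of_posSemidef_sub (by simpa [hAtil] using hA)
  have hratio : 4 * T / γ / (V ^ 2 / γ) = 4 * T / V ^ 2 := div_div_div_cancel_right₀ hγ.ne' _ _
  simpa [hdhyb, hratio] using
    Real.sum_log_one_add_div_le (x := 4 * T / γ) hH.eigenvalues (by positivity) (by positivity) hlow
end

section
/- Let B > 0 and let p = σ(x), q = σ(y) for x, y ∈ [-B, B]. Then the binary KL divergence satisfies p·log(p/q) + (1-p)·log((1-p)/(1-q)) ≥ (e^{-2B}/8)·(x-y)² — in particular squared log-odds differences are controlled by binary KL divergence on a bounded range. -/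
noncomputable def sigmoid (x : ℝ) : ℝ := 1 / (1 + Real.exp (-x))

/-!
Writing `softplus t = log (1 + eᵗ)`, one has `log σ(t) = t - softplus t` and
`log (1 - σ(t)) = -softplus t`, so the binary KL divergence between `σ(x)` and `σ(y)` is the
Bregman divergence `softplus y - softplus x - σ(x) (y - x)` of `softplus`, whose derivative is `σ`.
On `[-B, B]` the second derivative `σ (1 - σ)` is at least `e^{-2B}/4`, since `σ(±t) ≥ e^{-|t|}/2`;
this strong convexity bounds the Bregman divergence below by `e^{-2B}/8 · (y - x)²`.
-/

theorem ConvexOn.add_mul_sub_le_of_hasDerivAt {S : Set ℝ} {f : ℝ → ℝ} {f' x y : ℝ}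
    (hf : ConvexOn ℝ S f) (hx : x ∈ S) (hy : y ∈ S) (hd : HasDerivAt f f' x) :
    f x + f' * (y - x) ≤ f y := by
  rcases lt_trichotomy x y with hxy | rfl | hyx
  · have h := hf.le_slope_of_hasDerivAt hx hy hxy hd
    rw [slope_def_field, le_div_iff₀ (sub_pos.2 hxy)] at h
    linarith
  · simp
  · have h := hf.slope_le_of_hasDerivAt hy hx hyx hd
    rw [slope_def_field, div_le_iff₀ (sub_pos.2 hyx)] at h
    linarith

theorem half_mul_sq_le_bregman_of_le_deriv2 {D : Set ℝ} (hD : Convex ℝ D) {f f' f'' : ℝ → ℝ}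
    {m x y : ℝ} (hf : ∀ t ∈ D, HasDerivAt f (f' t) t) (hf' : ∀ t ∈ D, HasDerivAt f' (f'' t) t)
    (hm : ∀ t ∈ D, m ≤ f'' t) (hx : x ∈ D) (hy : y ∈ D) :
    m / 2 * (y - x) ^ 2 ≤ f y - f x - f' x * (y - x) := by
  have hg : ∀ t ∈ D, HasDerivAt (fun s ↦ f s - m / 2 * s ^ 2) (f' t - m * t) t := fun t ht ↦
    ((hf t ht).sub ((hasDerivAt_pow 2 t).const_mul (m / 2))).congr_deriv (by ring)
  have hg' : ∀ t ∈ D, HasDerivAt (fun s ↦ f' s - m * s) (f'' t - m) t := fun t ht ↦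
    ((hf' t ht).sub ((hasDerivAt_id t).const_mul m)).congr_deriv (by simp)
  have hconvex : ConvexOn ℝ D (fun s ↦ f s - m / 2 * s ^ 2) :=
    convexOn_of_hasDerivWithinAt2_nonneg hD
      (fun t ht ↦ (hg t ht).continuousAt.continuousWithinAt)
      (fun t ht ↦ (hg t (interior_subset ht)).hasDerivWithinAt)
      (fun t ht ↦ (hg' t (interior_subset ht)).hasDerivWithinAt)
      (fun t ht ↦ sub_nonneg.2 (hm t (interior_subset ht)))
  linear_combination hconvex.add_mul_sub_le_of_hasDerivAt hx hy (hg x hx)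

theorem sigmoid_eq_real_sigmoid : sigmoid = Real.sigmoid := by
  ext t; rw [sigmoid, one_div, Real.sigmoid_def]

namespace Real

noncomputable def softplus (t : ℝ) : ℝ := log (1 + exp t)

theorem softplus_neg (t : ℝ) : softplus (-t) = softplus t - t := by
  have h : 1 + exp (-t) = (1 + exp t) * exp (-t) := by
    rw [add_mul, one_mul, ← exp_add, add_neg_cancel, exp_zero, add_comm]
  rw [softplus, softplus, h, log_mul (by positivity) (exp_ne_zero _), log_exp, sub_eq_add_neg]

theorem log_sigmoid (t : ℝ) : log (Real.sigmoid t) = t - softplus t := by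
  rw [Real.sigmoid_def, log_inv, ← neg_sub, ← softplus_neg]
  rfl

theorem log_one_sub_sigmoid (t : ℝ) : log (1 - Real.sigmoid t) = -softplus t := by
  rw [← Real.sigmoid_neg, log_sigmoid, softplus_neg]
  ring

theorem hasDerivAt_softplus (t : ℝ) : HasDerivAt softplus (Real.sigmoid t) t := by
  refine (((hasDerivAt_exp t).const_add 1).log (by positivity)).congr_deriv ?_
  rw [Real.sigmoid_def, exp_neg]
  field_simp
  ring

theorem exp_neg_abs_div_two_le_sigmoid (t : ℝ) : exp (-|t|) / 2 ≤ Real.sigmoid t := by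
  have h1 : 1 ≤ exp |t| := one_le_exp (abs_nonneg t)
  have h2 : exp (-t) ≤ exp |t| := exp_le_exp.2 (neg_le_abs t)
  calc exp (-|t|) / 2 = (2 * exp |t|)⁻¹ := by rw [exp_neg, mul_inv, div_eq_inv_mul]
    _ ≤ (1 + exp (-t))⁻¹ := inv_anti₀ (by positivity) (by linarith)
    _ = Real.sigmoid t := (Real.sigmoid_def t).symm

theorem exp_neg_two_mul_div_four_le_sigmoid_mul_one_sub {B t : ℝ} (ht : |t| ≤ B) :
    exp (-2 * B) / 4 ≤ Real.sigmoid t * (1 - Real.sigmoid t) := by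
  have hB : exp (-2 * B) = exp (-B) * exp (-B) := by rw [← exp_add]; ring_nf
  have hpos : exp (-B) / 2 ≤ Real.sigmoid t :=
    le_trans (by gcongr) (exp_neg_abs_div_two_le_sigmoid t)
  have hneg : exp (-B) / 2 ≤ 1 - Real.sigmoid t := by
    rw [← Real.sigmoid_neg]
    exact le_trans (by rw [abs_neg]; gcongr) (exp_neg_abs_div_two_le_sigmoid (-t))
  calc exp (-2 * B) / 4 = exp (-B) / 2 * (exp (-B) / 2) := by rw [hB]; ring
    _ ≤ _ := mul_le_mul hpos hneg (by positivity) (Real.sigmoid_nonneg t)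

theorem sigmoid_mul_log_div_add_one_sub_mul_log_div (x y : ℝ) :
    Real.sigmoid x * log (Real.sigmoid x / Real.sigmoid y)
        + (1 - Real.sigmoid x) * log ((1 - Real.sigmoid x) / (1 - Real.sigmoid y))
      = softplus y - softplus x - Real.sigmoid x * (y - x) := by
  rw [log_div (sigmoid_pos x).ne' (sigmoid_pos y).ne',
    log_div (sub_pos.2 (sigmoid_lt_one x)).ne' (sub_pos.2 (sigmoid_lt_one y)).ne',
    log_sigmoid, log_sigmoid, log_one_sub_sigmoid, log_one_sub_sigmoid]
  ring

end Real

theorem binary_kl_ge_sq_logodds_general (B x y : ℝ)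
    (hx : x ∈ Set.Icc (-B) B) (hy : y ∈ Set.Icc (-B) B) :
    Real.exp (-2 * B) / 8 * (x - y) ^ 2 ≤
      sigmoid x * Real.log (sigmoid x / sigmoid y)
        + (1 - sigmoid x) * Real.log ((1 - sigmoid x) / (1 - sigmoid y)) := by
  have hbregman := half_mul_sq_le_bregman_of_le_deriv2 (convex_Icc (-B) B)
    (fun t _ ↦ Real.hasDerivAt_softplus t) (fun t _ ↦ Real.hasDerivAt_sigmoid t)
    (fun t ht ↦ Real.exp_neg_two_mul_div_four_le_sigmoid_mul_one_sub (abs_le.2 ht)) hx hy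
  rw [sigmoid_eq_real_sigmoid, Real.sigmoid_mul_log_div_add_one_sub_mul_log_div]
  linear_combination hbregman

/-- Binary KL divergence between `σ(x)` and `σ(y)` controls the squared
log-odds difference on a bounded range. -/
theorem binary_kl_ge_sq_logodds (B x y : ℝ) (hB : 0 < B)
    (hx : x ∈ Set.Icc (-B) B) (hy : y ∈ Set.Icc (-B) B) :
    Real.exp (-2 * B) / 8 * (x - y) ^ 2 ≤
      sigmoid x * Real.log (sigmoid x / sigmoid y)
        + (1 - sigmoid x) * Real.log ((1 - sigmoid x) / (1 - sigmoid y)) :=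
  binary_kl_ge_sq_logodds_general B x y hx hy
end
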